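/- arXiv:1401.2143 — 4 statements merged into one kernel-verified Lean document; each statement's English description precedes it below -/
import Mathlib

section
/- With the symmetric pair data of a simple Lie algebra g = h ⊕ m and Casimir eigenvalue c_g, the mixed structure constants satisfy Σ_α g_q^{pα} [X_α, Y_p] = (c_g/2) Y_q and Σ_α g_p^{rα} g_{αr}^q = (c_g/2) δ_p^q. -/
/-!
In a basis adapted to `g = h ⊕ m` the Killing form `κ` is block diagonal, hence so is its inverse,
and the Casimir relation evaluated between `Y_p` and `Y_q` splits into an `h`-part
`Σ κ^{αβ} g_{αp}^r g_{βr}^q` and an `m`-part `Σ κ^{st} g_{sp}^γ g_{tγ}^q`. Raising indices with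
`κ⁻¹` writes both through the numbers `κ([X_α, Y_p], Y_s)`, and invariance of `κ` makes the two
parts equal, so each is `c_g / 2`. The vector identity follows by expanding `[X_α, Y_p]` in the
basis, using `[h, m] ⊆ m`.
-/

open Finset Matrix

section StructureConstants

variable {R L ι : Type*} [CommRing R] [LieRing L] [LieAlgebra R L] [Fintype ι]
  {x : Module.Basis ι R L} {A : ι → ι → ι → R}

theorem Module.Basis.repr_lie_eq (hA : ∀ a b, ⁅x a, x b⁆ = ∑ c, A a b c • x c) (a b c : ι) :
    x.repr ⁅x a, x b⁆ c = A a b c := by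
  rw [hA, x.repr_sum_self]

theorem structConst_swap_eq_neg (hA : ∀ a b, ⁅x a, x b⁆ = ∑ c, A a b c • x c) (a b c : ι) :
    A b a c = -A a b c := by
  rw [← x.repr_lie_eq hA, ← lie_skew, map_neg, Finsupp.neg_apply, x.repr_lie_eq hA]

theorem killingForm_basis_eq_sum [Module.Free R L] [Module.Finite R L]
    (hA : ∀ a b, ⁅x a, x b⁆ = ∑ c, A a b c • x c) (a b : ι) :
    killingForm R L (x a) (x b) = ∑ c, ∑ d, A a c d * A b d c := by
  classical
  rw [LieModule.traceForm_apply_apply, LinearMap.trace_eq_matrix_trace R x,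
    LinearMap.toMatrix_comp x x x, Matrix.trace, Finset.sum_comm]
  simp [Matrix.mul_apply, LinearMap.toMatrix_apply, x.repr_lie_eq hA]

end StructureConstants

theorem killingForm_lie_apply_eq_neg {R L : Type*} [CommRing R] [LieRing L] [LieAlgebra R L]
    (a b c : L) : killingForm R L ⁅a, b⁆ c = -killingForm R L ⁅c, b⁆ a := by
  rw [LieModule.traceForm_apply_lie_apply, LieModule.traceForm_comm, ← lie_skew, map_neg,
    LinearMap.neg_apply]

theorem Matrix.eq_fromBlocks_inv_of_fromBlocks_zero_mul_eq_one {m n α : Type*} [Fintype m]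
    [Fintype n] [DecidableEq m] [DecidableEq n] [CommRing α] {A : Matrix m m α}
    {D : Matrix n n α} {N : Matrix (m ⊕ n) (m ⊕ n) α} (h : fromBlocks A 0 0 D * N = 1) :
    N = fromBlocks A⁻¹ 0 0 D⁻¹ := by
  obtain ⟨hA, hD⟩ := isUnit_fromBlocks_zero₂₁.mp (IsUnit.of_mul_eq_one _ h)
  rw [← inv_eq_right_inv h, inv_fromBlocks_zero₂₁_of_isUnit_iff _ _ _ (iff_of_true hA hD),
    Matrix.mul_zero, Matrix.zero_mul, neg_zero]

section GramInverse

variable {R M : Type*} [CommRing R] [AddCommGroup M] [Module R M] {B : LinearMap.BilinForm R M}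

theorem Module.Basis.repr_eq_sum_mul_of_toMatrix_mul_eq_one {ι : Type*} [Fintype ι]
    [DecidableEq ι] {x : Module.Basis ι R M} {N : Matrix ι ι R}
    (hN : LinearMap.BilinForm.toMatrix x B * N = 1) (v : M) (c : ι) :
    x.repr v c = ∑ s, B v (x s) * N s c := by
  have hB : (fun s => B v (x s)) = x.repr v ᵥ* LinearMap.BilinForm.toMatrix x B := by
    ext s
    conv_lhs => rw [← x.sum_repr v]
    simp [vecMul, dotProduct, LinearMap.BilinForm.toMatrix_apply, -Module.Basis.sum_repr]
  have := congrFun (congrArg (· ᵥ* N) hB) c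
  rw [vecMul_vecMul, hN, vecMul_one] at this
  exact this.symm

variable {ι₁ ι₂ : Type*} [Fintype ι₁] [Fintype ι₂] [DecidableEq ι₁] [DecidableEq ι₂]
  {x : Module.Basis (ι₁ ⊕ ι₂) R M} {H : Matrix ι₁ ι₁ R} {K : Matrix ι₂ ι₂ R}

theorem Module.Basis.repr_inl_eq_sum
    (hN : LinearMap.BilinForm.toMatrix x B * fromBlocks H 0 0 K = 1) (v : M) (γ : ι₁) :
    x.repr v (.inl γ) = ∑ δ, B v (x (.inl δ)) * H δ γ := by
  simp [x.repr_eq_sum_mul_of_toMatrix_mul_eq_one hN]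

theorem Module.Basis.repr_inr_eq_sum
    (hN : LinearMap.BilinForm.toMatrix x B * fromBlocks H 0 0 K = 1) (v : M) (r : ι₂) :
    x.repr v (.inr r) = ∑ s, B v (x (.inr s)) * K s r := by
  simp [x.repr_eq_sum_mul_of_toMatrix_mul_eq_one hN]

theorem LinearMap.IsSymm.transpose_eq_of_toBlocks₁₁_toMatrix_mul_eq_one (hB : LinearMap.IsSymm B)
    (hH : (LinearMap.BilinForm.toMatrix x B).toBlocks₁₁ * H = 1) : Hᵀ = H := by
  have hG : (LinearMap.BilinForm.toMatrix x B).toBlocks₁₁ᵀ =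
      (LinearMap.BilinForm.toMatrix x B).toBlocks₁₁ := by
    ext
    exact hB.eq _ _
  rw [← inv_eq_right_inv hH, transpose_nonsing_inv, hG]

end GramInverse

section MixedCasimir

variable {R L ιh ιm : Type*} [CommRing R] [LieRing L] [LieAlgebra R L] [Fintype ιh] [Fintype ιm]
  {x : Module.Basis (ιh ⊕ ιm) R L} {A : (ιh ⊕ ιm) → (ιh ⊕ ιm) → (ιh ⊕ ιm) → R}

theorem sum_smul_lie_inl_inr (hA : ∀ a b, ⁅x a, x b⁆ = ∑ c, A a b c • x c)
    (hhm : ∀ α p β, A (.inl α) (.inr p) (.inl β) = 0) (c : ιh → ιm → R) :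
    ∑ α, ∑ p, c α p • ⁅x (.inl α), x (.inr p)⁆
      = ∑ r, (∑ α, ∑ p, c α p * A (.inl α) (.inr p) (.inr r)) • x (.inr r) := by
  simp only [hA, Fintype.sum_sum_type, hhm, zero_smul, sum_const_zero, zero_add, smul_sum,
    smul_smul, sum_smul]
  rw [sum_comm_cycle]

variable [DecidableEq ιh] [DecidableEq ιm] {H : Matrix ιh ιh R} {K : Matrix ιm ιm R}

theorem sum_inl_structConst_mul_eq_sum_inr (hA : ∀ a b, ⁅x a, x b⁆ = ∑ c, A a b c • x c)
    (hN : LinearMap.BilinForm.toMatrix x (killingForm R L) * fromBlocks H 0 0 K = 1)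
    (c d : ιh ⊕ ιm) :
    ∑ α, ∑ β, ∑ r, H α β * A (.inl α) c (.inr r) * A (.inl β) (.inr r) d
      = ∑ s, ∑ t, ∑ γ, K s t * A (.inr s) c (.inl γ) * A (.inr t) (.inl γ) d := by
  set f : ιh → ιm → R := fun α s => killingForm R L ⁅x (.inl α), x c⁆ (x (.inr s))
  have raise_inr : ∀ α r, A (.inl α) c (.inr r) = ∑ s, f α s * K s r := fun α r => by
    rw [← x.repr_lie_eq hA, x.repr_inr_eq_sum hN]
  have raise_inl : ∀ s γ, A (.inr s) c (.inl γ) = -∑ δ, f δ s * H δ γ := fun s γ => by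
    rw [← x.repr_lie_eq hA, x.repr_inl_eq_sum hN, ← sum_neg_distrib]
    simp only [f, killingForm_lie_apply_eq_neg (x (.inr _)), neg_mul]
  calc _ = ∑ α, ∑ s, f α s * ∑ β, ∑ r, H α β * K s r * A (.inl β) (.inr r) d := by
        refine sum_congr rfl fun α _ => ?_
        simp only [raise_inr, mul_sum, sum_mul]
        rw [sum_comm_cycle]
        exact sum_congr rfl fun _ _ => sum_congr rfl fun _ _ => sum_congr rfl fun _ _ => by ring
    _ = _ := by
        rw [sum_comm]
        refine sum_congr rfl fun s _ => ?_
        simp only [raise_inl, structConst_swap_eq_neg hA (.inl _) (.inr _), mul_sum, sum_mul,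
          neg_mul, mul_neg, neg_neg]
        rw [sum_comm_cycle]
        refine sum_congr rfl fun _ _ => ?_
        rw [sum_comm]
        exact sum_congr rfl fun _ _ => sum_congr rfl fun _ _ => by ring

theorem casimir_inr_inr_eq_two_mul (hA : ∀ a b, ⁅x a, x b⁆ = ∑ c, A a b c • x c)
    (hhm : ∀ α p β, A (.inl α) (.inr p) (.inl β) = 0)
    (hmm : ∀ p q r, A (.inr p) (.inr q) (.inr r) = 0)
    (hN : LinearMap.BilinForm.toMatrix x (killingForm R L) * fromBlocks H 0 0 K = 1)
    (hH : Hᵀ = H) (p q : ιm) :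
    ∑ a, ∑ b, ∑ e, fromBlocks H 0 0 K a b * A a (.inr p) e * A b e (.inr q)
      = 2 * ∑ α, ∑ r, (∑ ρ, H α ρ * A (.inl ρ) (.inr p) (.inr r))
          * A (.inl α) (.inr r) (.inr q) := by
  simp only [Fintype.sum_sum_type, fromBlocks_apply₁₁, fromBlocks_apply₁₂, fromBlocks_apply₂₁,
    fromBlocks_apply₂₂, hhm, hmm, Matrix.zero_apply, zero_mul, mul_zero, sum_const_zero, add_zero,
    zero_add]
  rw [← sum_inl_structConst_mul_eq_sum_inr hA hN, ← two_mul]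
  simp only [sum_mul]
  conv_rhs => rw [sum_comm_cycle]
  refine congrArg _ (sum_congr rfl fun _ _ => sum_congr rfl fun _ _ => sum_congr rfl fun _ _ => ?_)
  rw [← transpose_apply H, hH]

end MixedCasimir

section KillingBlocks

variable {R L ιh ιm : Type*} [CommRing R] [LieRing L] [LieAlgebra R L] [Module.Free R L]
  [Module.Finite R L] [Fintype ιh] [Fintype ιm]
  {x : Module.Basis (ιh ⊕ ιm) R L} {A : (ιh ⊕ ιm) → (ιh ⊕ ιm) → (ιh ⊕ ιm) → R}

theorem killingForm_inl_inr_eq_zero (hA : ∀ a b, ⁅x a, x b⁆ = ∑ c, A a b c • x c)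
    (hhh : ∀ α β p, A (.inl α) (.inl β) (.inr p) = 0)
    (hhm : ∀ α p β, A (.inl α) (.inr p) (.inl β) = 0)
    (hmm : ∀ p q r, A (.inr p) (.inr q) (.inr r) = 0) (α : ιh) (p : ιm) :
    killingForm R L (x (.inl α)) (x (.inr p)) = 0 := by
  simp [killingForm_basis_eq_sum hA, Fintype.sum_sum_type, hhh, hhm, hmm,
    structConst_swap_eq_neg hA (.inl _) (.inr _)]

variable [DecidableEq ιh] [DecidableEq ιm]

theorem toMatrix_killingForm_eq_fromBlocks (hA : ∀ a b, ⁅x a, x b⁆ = ∑ c, A a b c • x c)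
    (hhh : ∀ α β p, A (.inl α) (.inl β) (.inr p) = 0)
    (hhm : ∀ α p β, A (.inl α) (.inr p) (.inl β) = 0)
    (hmm : ∀ p q r, A (.inr p) (.inr q) (.inr r) = 0) :
    LinearMap.BilinForm.toMatrix x (killingForm R L) =
      fromBlocks (LinearMap.BilinForm.toMatrix x (killingForm R L)).toBlocks₁₁ 0 0
        (LinearMap.BilinForm.toMatrix x (killingForm R L)).toBlocks₂₂ := by
  conv_lhs => rw [← fromBlocks_toBlocks (LinearMap.BilinForm.toMatrix x (killingForm R L))]
  congr <;> ext <;>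
    simp [toBlocks₁₂, toBlocks₂₁, LinearMap.BilinForm.toMatrix_apply,
      killingForm_inl_inr_eq_zero hA hhh hhm hmm, LieModule.traceForm_comm R L L (x (.inr _))]

theorem eq_fromBlocks_of_toMatrix_killingForm_mul_eq_one
    (hA : ∀ a b, ⁅x a, x b⁆ = ∑ c, A a b c • x c)
    (hhh : ∀ α β p, A (.inl α) (.inl β) (.inr p) = 0)
    (hhm : ∀ α p β, A (.inl α) (.inr p) (.inl β) = 0)
    (hmm : ∀ p q r, A (.inr p) (.inr q) (.inr r) = 0)
    {H : Matrix ιh ιh R} {N : Matrix (ιh ⊕ ιm) (ιh ⊕ ιm) R}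
    (hN : LinearMap.BilinForm.toMatrix x (killingForm R L) * N = 1)
    (hH : (LinearMap.BilinForm.toMatrix x (killingForm R L)).toBlocks₁₁ * H = 1) :
    N = fromBlocks H 0 0 (LinearMap.BilinForm.toMatrix x (killingForm R L)).toBlocks₂₂⁻¹ := by
  rw [toMatrix_killingForm_eq_fromBlocks hA hhh hhm hmm] at hN
  rw [← inv_eq_right_inv hH]
  exact eq_fromBlocks_inv_of_fromBlocks_zero_mul_eq_one hN

end KillingBlocks

theorem symmetric_pair_mixed_constant_identities_general
    {L : Type*} [LieRing L] [LieAlgebra ℂ L]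
    [FiniteDimensional ℂ L]
    {ιh ιm : Type*} [Fintype ιh] [Fintype ιm]
    [DecidableEq ιh] [DecidableEq ιm]
    (x : Module.Basis (ιh ⊕ ιm) ℂ L)
    (A : (ιh ⊕ ιm) → (ιh ⊕ ιm) → (ιh ⊕ ιm) → ℂ)
    (hA : ∀ a b, ⁅x a, x b⁆ = ∑ c, A a b c • x c)
    (hhh : ∀ α β p, A (.inl α) (.inl β) (.inr p) = 0)
    (hhm : ∀ α p β, A (.inl α) (.inr p) (.inl β) = 0)
    (hmm : ∀ p q r, A (.inr p) (.inr q) (.inr r) = 0)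
    (η : (ιh ⊕ ιm) → (ιh ⊕ ιm) → ℂ)
    (hη : ∀ a b, η a b = ∑ c, ∑ d, A a c d * A b d c)
    (ηinv : (ιh ⊕ ιm) → (ιh ⊕ ιm) → ℂ)
    (hηinv : ∀ a c, (∑ b, η a b * ηinv b c) = if a = c then 1 else 0)
    (ηinvh : ιh → ιh → ℂ)
    (hηinvh : ∀ α β, (∑ γ, η (.inl α) (.inl γ) * ηinvh γ β) = if α = β then 1 else 0)
    (cg : ℂ)
    (hcg : ∀ c d, (∑ a, ∑ b, ∑ e, ηinv a b * A a c e * A b e d)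
        = cg * (if c = d then 1 else 0)) :
    (∀ q, (∑ α, ∑ p, (∑ ρ, ηinvh α ρ * A (.inl ρ) (.inr q) (.inr p)) •
          ⁅x (.inl α), x (.inr p)⁆)
        = (cg / 2) • x (.inr q)) ∧
    (∀ p q, (∑ α, ∑ r, (∑ ρ, ηinvh α ρ * A (.inl ρ) (.inr p) (.inr r))
          * A (.inl α) (.inr r) (.inr q))
        = (cg / 2) * (if p = q then 1 else 0)) := by
  have hκ : ∀ a b, η a b = killingForm ℂ L (x a) (x b) := fun a b => by
    rw [hη, killingForm_basis_eq_sum hA]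
  set G := LinearMap.BilinForm.toMatrix x (killingForm ℂ L)
  have hN : G * Matrix.of ηinv = 1 := by
    ext a c
    simpa [G, mul_apply, one_apply, LinearMap.BilinForm.toMatrix_apply, hκ] using hηinv a c
  have hH : G.toBlocks₁₁ * Matrix.of ηinvh = 1 := by
    ext α β
    simpa [G, toBlocks₁₁, mul_apply, one_apply, LinearMap.BilinForm.toMatrix_apply, hκ]
      using hηinvh α β
  have hηinv_eq : ηinv = fromBlocks (Matrix.of ηinvh) 0 0 G.toBlocks₂₂⁻¹ :=
    eq_fromBlocks_of_toMatrix_killingForm_mul_eq_one hA hhh hhm hmm hN hH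
  subst hηinv_eq
  have hmixed : ∀ p q, (∑ α, ∑ r, (∑ ρ, ηinvh α ρ * A (.inl ρ) (.inr p) (.inr r))
      * A (.inl α) (.inr r) (.inr q)) = (cg / 2) * (if p = q then 1 else 0) := fun p q => by
    have h := hcg (.inr p) (.inr q)
    rw [casimir_inr_inr_eq_two_mul hA hhm hmm hN
      ((LieModule.traceForm_isSymm ℂ L L).transpose_eq_of_toBlocks₁₁_toMatrix_mul_eq_one hH)] at h
    simp only [Sum.inr.injEq, of_apply] at h
    linear_combination h / 2
  refine ⟨fun q => ?_, hmixed⟩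
  rw [sum_smul_lie_inl_inr hA hhm]
  simp [hmixed q]

/-- For a symmetric pair `g = h ⊕ m` of a finite dimensional complex simple Lie
algebra with symmetric space basis `x` (indexed by `ιh ⊕ ιm`), structure constants
`A`, Killing form `η` with full inverse `ηinv` and `h`-block inverse `ηinvh`, and
adjoint Casimir eigenvalue `cg`, the mixed structure constants
`g_{αp}^q = A (inl α) (inr p) (inr q)` with raised versions
`g_q^{pα} = ∑ ρ, ηinvh α ρ * g_{ρq}^p` satisfy
`Σ_α g_q^{pα} [X_α, Y_p] = (cg/2) Y_q` and `Σ_α g_p^{rα} g_{αr}^q = (cg/2) δ_p^q`. -/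
theorem symmetric_pair_mixed_constant_identities
    {L : Type*} [LieRing L] [LieAlgebra ℂ L]
    [FiniteDimensional ℂ L] [LieAlgebra.IsSimple ℂ L]
    {ιh ιm : Type*} [Fintype ιh] [Fintype ιm]
    [DecidableEq ιh] [DecidableEq ιm]
    (x : Module.Basis (ιh ⊕ ιm) ℂ L)
    (A : (ιh ⊕ ιm) → (ιh ⊕ ιm) → (ιh ⊕ ιm) → ℂ)
    (hA : ∀ a b, ⁅x a, x b⁆ = ∑ c, A a b c • x c)
    (hhh : ∀ α β p, A (.inl α) (.inl β) (.inr p) = 0)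
    (hhm : ∀ α p β, A (.inl α) (.inr p) (.inl β) = 0)
    (hmm : ∀ p q r, A (.inr p) (.inr q) (.inr r) = 0)
    (η : (ιh ⊕ ιm) → (ιh ⊕ ιm) → ℂ)
    (hη : ∀ a b, η a b = ∑ c, ∑ d, A a c d * A b d c)
    (ηinv : (ιh ⊕ ιm) → (ιh ⊕ ιm) → ℂ)
    (hηinv : ∀ a c, (∑ b, η a b * ηinv b c) = if a = c then 1 else 0)
    (ηinvh : ιh → ιh → ℂ)
    (hηinvh : ∀ α β, (∑ γ, η (.inl α) (.inl γ) * ηinvh γ β) = if α = β then 1 else 0)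
    (cg : ℂ)
    (hcg : ∀ c d, (∑ a, ∑ b, ∑ e, ηinv a b * A a c e * A b e d)
        = cg * (if c = d then 1 else 0)) :
    (∀ q, (∑ α, ∑ p, (∑ ρ, ηinvh α ρ * A (.inl ρ) (.inr q) (.inr p)) •
          ⁅x (.inl α), x (.inr p)⁆)
        = (cg / 2) • x (.inr q)) ∧
    (∀ p q, (∑ α, ∑ r, (∑ ρ, ηinvh α ρ * A (.inl ρ) (.inr p) (.inr r))
          * A (.inl α) (.inr r) (.inr q))
        = (cg / 2) * (if p = q then 1 else 0)) :=
  symmetric_pair_mixed_constant_identities_general x A hA hhh hhm hmm η hη ηinv hηinv ηinvh hηinvh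
    cg hcg
end

section
/- In the universal enveloping algebra U(g) of a simple Lie algebra g with basis {x_a}, Killing form η, and Ω_g = η^{ab} x_a ⊗ x_b ∈ U(g)⊗U(g), the following identity holds: [[x_i⊗1, Ω_g], Ω_g] = (1/2)(α_i^{jc} α_j^{ab} + α_i^{jb} α_j^{ac}) (x_a ⊗ {x_b,x_c} − {x_b,x_c} ⊗ x_a), where {x,y} = (xy+yx)/2. -/
open TensorProduct

/-- The commutator `[x,y] = xy - yx` in an associative algebra. -/
def comm' {A : Type*} [Ring A] (x y : A) : A := x * y - y * x

/-- The symmetrized product `{x,y} = (xy + yx)/2`. -/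
noncomputable def acomm' {A : Type*} [Ring A] [Algebra ℂ A] (x y : A) : A :=
  (2⁻¹ : ℂ) • (x * y + y * x)

/-!
Expanding both commutators with `[a ⊗ b, c ⊗ d] = [a, c] ⊗ {b, d} + {a, c} ⊗ [b, d]` writes
`[[x_i ⊗ 1, Ω], Ω]` as `∑ L_{abc} x_a ⊗ {x_b, x_c} + ∑ L'_{abc} {x_b, x_c} ⊗ x_a`. As `{x_b, x_c}`
is symmetric in `b, c`, only the symmetrizations of `L` and `L'` in `b, c` matter, and these are
computed from the symmetry of `η^{ab}` and the antisymmetry of `α_i^{bc}` in `b, c`, which is the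
ad-invariance of the Killing form.
-/

open Finset
open scoped Matrix

theorem comm'_ι {R L : Type*} [CommRing R] [LieRing L] [LieAlgebra R L] (x y : L) :
    comm' (UniversalEnvelopingAlgebra.ι R x) (UniversalEnvelopingAlgebra.ι R y) =
      UniversalEnvelopingAlgebra.ι R ⁅x, y⁆ := by
  let _ := LieRing.ofAssociativeRing (A := UniversalEnvelopingAlgebra R L)
  rw [LieHom.map_lie, Ring.lie_def, comm']

section Commutator

variable {A : Type*} [Ring A]

theorem comm'_sum_left {κ : Type*} (s : Finset κ) (f : κ → A) (y : A) :
    comm' (∑ k ∈ s, f k) y = ∑ k ∈ s, comm' (f k) y := by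
  simp only [comm', sum_mul, mul_sum, sum_sub_distrib]

theorem comm'_sum_right {κ : Type*} (s : Finset κ) (y : A) (f : κ → A) :
    comm' y (∑ k ∈ s, f k) = ∑ k ∈ s, comm' y (f k) := by
  simp only [comm', sum_mul, mul_sum, sum_sub_distrib]

variable {R B : Type*} [CommSemiring R] [Ring B] [Algebra R A] [Algebra R B]

theorem comm'_smul_left (r : R) (a b : A) : comm' (r • a) b = r • comm' a b := by
  simp only [comm', smul_sub, smul_mul_assoc, mul_smul_comm]

theorem comm'_smul_right (r : R) (a b : A) : comm' a (r • b) = r • comm' a b := by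
  simp only [comm', smul_sub, smul_mul_assoc, mul_smul_comm]

theorem comm'_tmul_one_tmul (u a : A) (b : B) :
    comm' (u ⊗ₜ[R] (1 : B)) (a ⊗ₜ[R] b) = comm' u a ⊗ₜ[R] b := by
  simp only [comm', Algebra.TensorProduct.tmul_mul_tmul, one_mul, mul_one, sub_tmul]

end Commutator

section Anticommutator

variable {A B : Type*} [Ring A] [Ring B] [Algebra ℂ A] [Algebra ℂ B]

theorem acomm'_comm (a b : A) : acomm' a b = acomm' b a := by
  rw [acomm', acomm', add_comm]

theorem comm'_tmul_tmul (a c : A) (b d : B) :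
    comm' (a ⊗ₜ[ℂ] b) (c ⊗ₜ[ℂ] d) = comm' a c ⊗ₜ[ℂ] acomm' b d + acomm' a c ⊗ₜ[ℂ] comm' b d := by
  simp only [comm', acomm', Algebra.TensorProduct.tmul_mul_tmul]
  rw [tmul_smul, ← smul_tmul']
  simp only [sub_tmul, tmul_sub, tmul_add, add_tmul, smul_add, smul_sub]
  module

end Anticommutator

namespace Matrix

variable {n R : Type*} [Fintype n] [DecidableEq n] [CommRing R] {E F A : Matrix n n R}

theorem IsSymm.of_mul_eq_one (hEF : E * F = 1) (hE : E.IsSymm) : F.IsSymm :=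
  inv_eq_right_inv hEF ▸ hE.inv

theorem transpose_mul_eq_neg_of_mul_eq_one (hEF : E * F = 1) (hE : E.IsSymm)
    (hAE : (A * E)ᵀ = -(A * E)) : (F * A)ᵀ = -(F * A) := by
  have hFA : F * A = F * (A * E) * F := by rw [Matrix.mul_assoc, Matrix.mul_assoc, hEF, mul_one]
  rw [hFA, transpose_mul, transpose_mul, hAE, (hE.of_mul_eq_one hEF).eq, neg_mul, mul_neg,
    Matrix.mul_assoc F]

end Matrix

section KillingForm

variable {R L ι : Type*} [CommRing R] [LieRing L] [LieAlgebra R L] [Fintype ι]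
  {x : Module.Basis ι R L} {α : ι → ι → ι → R} {η ηinv : ι → ι → R}

theorem killingForm_basis_apply (b : Module.Basis ι R L) (i j : ι) :
    killingForm R L (b i) (b j) = ∑ c, ∑ d, b.repr ⁅b i, b d⁆ c * b.repr ⁅b j, b c⁆ d := by
  classical
  rw [LieModule.traceForm_apply_apply, LinearMap.trace_eq_matrix_trace R b,
    LinearMap.toMatrix_comp b b b, Matrix.trace]
  simp [Matrix.mul_apply, LinearMap.toMatrix_apply]

theorem killingForm_basis_eq (hα : ∀ a b, ⁅x a, x b⁆ = ∑ c, α a b c • x c)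
    (hη : ∀ a b, η a b = ∑ c, ∑ d, α a c d * α b d c) (a b : ι) :
    killingForm R L (x a) (x b) = η a b := by
  simp only [killingForm_basis_apply, hα, Module.Basis.repr_sum_self, hη]
  exact sum_comm

theorem sum_structureConst_mul_killingForm_eq_neg (hα : ∀ a b, ⁅x a, x b⁆ = ∑ c, α a b c • x c)
    (i n m : ι) :
    ∑ e, α i n e * killingForm R L (x e) (x m) =
      -∑ e, α i m e * killingForm R L (x e) (x n) := by
  simpa [hα, map_sum, LieModule.traceForm_comm R L L _ (x n)] using
    LieModule.traceForm_apply_lie_apply' R L L (x i) (x n) (x m)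

theorem killingMatrix_isSymm (hα : ∀ a b, ⁅x a, x b⁆ = ∑ c, α a b c • x c)
    (hη : ∀ a b, η a b = ∑ c, ∑ d, α a c d * α b d c) : (Matrix.of η).IsSymm := by
  ext a b
  simp [← killingForm_basis_eq hα hη, LieModule.traceForm_comm]

variable [DecidableEq ι]

theorem killingMatrix_mul_inv (hηinv : ∀ a c, (∑ b, η a b * ηinv b c) = if a = c then 1 else 0) :
    Matrix.of η * Matrix.of ηinv = 1 := by
  ext a c
  simp [Matrix.mul_apply, Matrix.one_apply, hηinv]

theorem inv_killingMatrix_symm (hα : ∀ a b, ⁅x a, x b⁆ = ∑ c, α a b c • x c)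
    (hη : ∀ a b, η a b = ∑ c, ∑ d, α a c d * α b d c)
    (hηinv : ∀ a c, (∑ b, η a b * ηinv b c) = if a = c then 1 else 0) (a b : ι) :
    ηinv a b = ηinv b a :=
  ((killingMatrix_isSymm hα hη).of_mul_eq_one (killingMatrix_mul_inv hηinv)).apply b a

theorem raisedStructureConst_skew (hα : ∀ a b, ⁅x a, x b⁆ = ∑ c, α a b c • x c)
    (hη : ∀ a b, η a b = ∑ c, ∑ d, α a c d * α b d c)
    (hηinv : ∀ a c, (∑ b, η a b * ηinv b c) = if a = c then 1 else 0)
    {αup : ι → ι → ι → R} (hαup : ∀ a b c, αup a b c = ∑ d, ηinv b d * α a d c) (i b c : ι) :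
    αup i b c = -αup i c b := by
  have hAE : (Matrix.of (α i) * Matrix.of η)ᵀ = -(Matrix.of (α i) * Matrix.of η) := by
    ext n m
    simp only [Matrix.transpose_apply, Matrix.neg_apply, Matrix.mul_apply, Matrix.of_apply,
      ← killingForm_basis_eq hα hη]
    exact sum_structureConst_mul_killingForm_eq_neg hα i m n
  simpa [Matrix.mul_apply, hαup] using congr_fun₂ (Matrix.transpose_mul_eq_neg_of_mul_eq_one
    (killingMatrix_mul_inv hηinv) (killingMatrix_isSymm hα hη) hAE) c b

end KillingForm

section RaisedStructureConst

variable {R ι : Type*} [CommRing R] [Fintype ι] {α αup : ι → ι → ι → R} {ηinv : ι → ι → R}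

theorem sum_inv_mul_structureConst (hαup : ∀ a b c, αup a b c = ∑ d, ηinv b d * α a d c)
    (hsymm : ∀ a b, ηinv a b = ηinv b a) (a b c : ι) :
    ∑ d, ηinv d b * α a d c = αup a b c := by
  rw [hαup]
  exact sum_congr rfl fun d _ => by rw [hsymm]

theorem sum_raised_mul_raised_add_swap (hskew : ∀ a b c, αup a b c = -αup a c b) (i a b c : ι) :
    ∑ j, αup i b j * αup j c a + ∑ j, αup i c j * αup j b a =
      ∑ j, (αup i j c * αup j a b + αup i j b * αup j a c) := by
  rw [← sum_add_distrib]
  refine sum_congr rfl fun j _ => ?_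
  rw [hskew i b j, hskew j c a, hskew i c j, hskew j b a]
  ring

theorem sum_raised_mul_raised_add_swap_eq_neg (hskew : ∀ a b c, αup a b c = -αup a c b)
    (i a b c : ι) :
    ∑ j, αup i j b * αup j c a + ∑ j, αup i j c * αup j b a =
      -∑ j, (αup i j c * αup j a b + αup i j b * αup j a c) := by
  rw [← sum_add_distrib, ← sum_neg_distrib]
  refine sum_congr rfl fun j _ => ?_
  rw [hskew j c a, hskew j b a]
  ring

end RaisedStructureConst

theorem sum_smul_eq_sum_symmetrize {ι K M : Type*} [Fintype ι] [Field K] [CharZero K]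
    [AddCommGroup M] [Module K M] (f : ι → ι → K) {g : ι → ι → M} (hg : ∀ b c, g b c = g c b) :
    ∑ b, ∑ c, f b c • g b c = ∑ b, ∑ c, (2⁻¹ * (f b c + f c b)) • g b c := by
  have hswap : ∑ b, ∑ c, f c b • g b c = ∑ b, ∑ c, f b c • g b c := by
    rw [sum_comm]
    exact sum_congr rfl fun b _ => sum_congr rfl fun c _ => by rw [hg]
  simp only [mul_add, add_smul, sum_add_distrib, ← smul_smul, ← smul_sum, hswap, ← smul_add]
  rw [← two_smul K, smul_smul, inv_mul_cancel₀ two_ne_zero, one_smul]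

section SumTmul

variable {A ι : Type*} [Ring A] [Algebra ℂ A] [Fintype ι]

noncomputable def sumTmul (X : ι → A) (F : ι → ι → ℂ) : A ⊗[ℂ] A :=
  ∑ a, ∑ b, F a b • (X a ⊗ₜ X b)

noncomputable def sumTmulAcomm (X : ι → A) (G : ι → ι → ι → ℂ) : A ⊗[ℂ] A :=
  ∑ a, ∑ b, ∑ c, G a b c • (X a ⊗ₜ acomm' (X b) (X c))

noncomputable def sumAcommTmul (X : ι → A) (G : ι → ι → ι → ℂ) : A ⊗[ℂ] A :=
  ∑ a, ∑ b, ∑ c, G a b c • (acomm' (X b) (X c) ⊗ₜ X a)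

variable {X : ι → A} {α : ι → ι → ι → ℂ}

theorem sumTmulAcomm_symmetrize (G : ι → ι → ι → ℂ) :
    sumTmulAcomm X G = sumTmulAcomm X fun a b c => 2⁻¹ * (G a b c + G a c b) :=
  sum_congr rfl fun a _ => sum_smul_eq_sum_symmetrize _ fun b c => by rw [acomm'_comm]

theorem sumAcommTmul_symmetrize (G : ι → ι → ι → ℂ) :
    sumAcommTmul X G = sumAcommTmul X fun a b c => 2⁻¹ * (G a b c + G a c b) :=
  sum_congr rfl fun a _ => sum_smul_eq_sum_symmetrize _ fun b c => by rw [acomm'_comm]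

theorem smul_sum_smul_tmul_acomm_sub (r : ℂ) (C : ι → ι → ι → ι → ℂ) :
    r • ∑ j, ∑ a, ∑ b, ∑ c, C j a b c •
        (X a ⊗ₜ[ℂ] acomm' (X b) (X c) - acomm' (X b) (X c) ⊗ₜ[ℂ] X a) =
      sumTmulAcomm X (fun a b c => r * ∑ j, C j a b c) +
        sumAcommTmul X (fun a b c => -(r * ∑ j, C j a b c)) := by
  simp only [sumTmulAcomm, sumAcommTmul, smul_sub, sum_sub_distrib, smul_sum, mul_sum, sum_smul,
    smul_smul, neg_smul, sum_neg_distrib, ← sub_eq_add_neg]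
  refine congrArg₂ (· - ·) ?_ ?_ <;> simp only [← Fintype.sum_prod_type'] <;>
    exact Fintype.sum_equiv ⟨fun ⟨j, a, b, c⟩ => ⟨a, b, c, j⟩, fun ⟨a, b, c, j⟩ => ⟨j, a, b, c⟩,
      fun _ => rfl, fun _ => rfl⟩ _ _ fun _ => by dsimp only [Equiv.coe_fn_mk]

theorem comm'_tmul_one_sumTmul (hX : ∀ a b, comm' (X a) (X b) = ∑ c, α a b c • X c)
    (i : ι) (F : ι → ι → ℂ) :
    comm' (X i ⊗ₜ[ℂ] (1 : A)) (sumTmul X F) = sumTmul X fun c b => ∑ a, F a b * α i a c := by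
  simp only [sumTmul, comm'_sum_right, comm'_smul_right, comm'_tmul_one_tmul, hX, sum_tmul,
    smul_sum, sum_smul, smul_tmul', smul_smul]
  simp only [← Fintype.sum_prod_type']
  exact Fintype.sum_equiv ⟨fun ⟨a, b, c⟩ => ⟨c, b, a⟩, fun ⟨c, b, a⟩ => ⟨a, b, c⟩,
    fun _ => rfl, fun _ => rfl⟩ _ _ fun _ => rfl

theorem comm'_sumTmul_sumTmul (hX : ∀ a b, comm' (X a) (X b) = ∑ c, α a b c • X c)
    (F G : ι → ι → ℂ) :
    comm' (sumTmul X F) (sumTmul X G) =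
      sumTmulAcomm X (fun k b e => ∑ c, F c b * ∑ d, G d e * α c d k) +
        sumAcommTmul X (fun k c d => ∑ b, F c b * ∑ e, G d e * α b e k) := by
  simp only [sumTmul, comm'_sum_right, comm'_sum_left, comm'_smul_right, comm'_smul_left,
    comm'_tmul_tmul, hX]
  simp only [sumTmulAcomm, sumAcommTmul, sum_tmul, tmul_sum, ← smul_tmul', tmul_smul,
    smul_sum, sum_smul, mul_sum, smul_add, sum_add_distrib, smul_smul]
  refine congrArg₂ (· + ·) ?_ ?_ <;> simp only [← Fintype.sum_prod_type']
  · exact Fintype.sum_equiv ⟨fun ⟨d, e, c, b, k⟩ => ⟨k, b, e, c, d⟩,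
      fun ⟨k, b, e, c, d⟩ => ⟨d, e, c, b, k⟩, fun _ => rfl, fun _ => rfl⟩ _ _
      fun _ => congrArg (· • _) (by dsimp only [Equiv.coe_fn_mk]; ring)
  · exact Fintype.sum_equiv ⟨fun ⟨d, e, c, b, k⟩ => ⟨k, c, d, b, e⟩,
      fun ⟨k, c, d, b, e⟩ => ⟨d, e, c, b, k⟩, fun _ => rfl, fun _ => rfl⟩ _ _
      fun _ => congrArg (· • _) (by dsimp only [Equiv.coe_fn_mk]; ring)

end SumTmul

theorem double_commutator_with_casimir_tensor_general
    {L : Type*} [LieRing L] [LieAlgebra ℂ L]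
    {ι : Type*} [Fintype ι] [DecidableEq ι]
    (x : Module.Basis ι ℂ L) (α : ι → ι → ι → ℂ)
    (hα : ∀ a b, ⁅x a, x b⁆ = ∑ c, α a b c • x c)
    (η : ι → ι → ℂ)
    (hη : ∀ a b, η a b = ∑ c, ∑ d, α a c d * α b d c)
    (ηinv : ι → ι → ℂ)
    (hηinv : ∀ a c, (∑ b, η a b * ηinv b c) = if a = c then 1 else 0)
    (αup : ι → ι → ι → ℂ)
    (hαup : ∀ a b c, αup a b c = ∑ d, ηinv b d * α a d c)
    (Ω : UniversalEnvelopingAlgebra ℂ L ⊗[ℂ] UniversalEnvelopingAlgebra ℂ L)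
    (hΩ : Ω = ∑ a, ∑ b, ηinv a b •
      ((UniversalEnvelopingAlgebra.ι ℂ (x a)) ⊗ₜ[ℂ] (UniversalEnvelopingAlgebra.ι ℂ (x b)))) :
    ∀ i, comm' (comm' ((UniversalEnvelopingAlgebra.ι ℂ (x i)) ⊗ₜ[ℂ]
          (1 : UniversalEnvelopingAlgebra ℂ L)) Ω) Ω
      = (2⁻¹ : ℂ) • ∑ j, ∑ a, ∑ b, ∑ c,
          (αup i j c * αup j a b + αup i j b * αup j a c) •
          ((UniversalEnvelopingAlgebra.ι ℂ (x a)) ⊗ₜ[ℂ]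
              (acomm' (UniversalEnvelopingAlgebra.ι ℂ (x b))
                (UniversalEnvelopingAlgebra.ι ℂ (x c)))
            - (acomm' (UniversalEnvelopingAlgebra.ι ℂ (x b))
                (UniversalEnvelopingAlgebra.ι ℂ (x c))) ⊗ₜ[ℂ]
              (UniversalEnvelopingAlgebra.ι ℂ (x a))) := by
  intro i
  set X : ι → UniversalEnvelopingAlgebra ℂ L := fun a => UniversalEnvelopingAlgebra.ι ℂ (x a)
  have hX : ∀ a b, comm' (X a) (X b) = ∑ c, α a b c • X c := fun a b => by
    simp only [X, comm'_ι, hα, map_sum, map_smul]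
  have hΩ' : Ω = sumTmul X ηinv := hΩ
  have hcontract := sum_inv_mul_structureConst hαup (inv_killingMatrix_symm hα hη hηinv)
  have hskew := raisedStructureConst_skew hα hη hηinv hαup
  calc comm' (comm' (X i ⊗ₜ[ℂ] 1) Ω) Ω
      = comm' (sumTmul X fun c b => αup i b c) (sumTmul X ηinv) := by
        rw [hΩ', comm'_tmul_one_sumTmul hX]
        simp only [hcontract]
    _ = sumTmulAcomm X (fun k b e => ∑ c, αup i b c * αup c e k) +
          sumAcommTmul X (fun k c d => ∑ b, αup i b c * αup b d k) := by
        rw [comm'_sumTmul_sumTmul hX]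
        simp only [hcontract, ← hαup]
    _ = _ := by
        rw [smul_sum_smul_tmul_acomm_sub, sumTmulAcomm_symmetrize, sumAcommTmul_symmetrize]
        simp only [sum_raised_mul_raised_add_swap hskew,
          sum_raised_mul_raised_add_swap_eq_neg hskew, mul_neg]
        rfl

/-- In `U(g) ⊗ U(g)` for a finite dimensional complex simple Lie algebra `g`
with basis `x`, structure constants `α`, inverse Killing form `ηinv`, raised
constants `αup a b c = ∑ d, ηinv b d * α a d c` and
`Ω = ∑ ηinv a b • (x_a ⊗ x_b)`, one has
`[[x_i⊗1, Ω], Ω] = (1/2)(α_i^{jc} α_j^{ab} + α_i^{jb} α_j^{ac})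
  (x_a ⊗ {x_b,x_c} − {x_b,x_c} ⊗ x_a)`. -/
theorem double_commutator_with_casimir_tensor
    {L : Type*} [LieRing L] [LieAlgebra ℂ L]
    [FiniteDimensional ℂ L] [LieAlgebra.IsSimple ℂ L]
    {ι : Type*} [Fintype ι] [DecidableEq ι]
    (x : Module.Basis ι ℂ L) (α : ι → ι → ι → ℂ)
    (hα : ∀ a b, ⁅x a, x b⁆ = ∑ c, α a b c • x c)
    (η : ι → ι → ℂ)
    (hη : ∀ a b, η a b = ∑ c, ∑ d, α a c d * α b d c)
    (ηinv : ι → ι → ℂ)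
    (hηinv : ∀ a c, (∑ b, η a b * ηinv b c) = if a = c then 1 else 0)
    (αup : ι → ι → ι → ℂ)
    (hαup : ∀ a b c, αup a b c = ∑ d, ηinv b d * α a d c)
    (Ω : UniversalEnvelopingAlgebra ℂ L ⊗[ℂ] UniversalEnvelopingAlgebra ℂ L)
    (hΩ : Ω = ∑ a, ∑ b, ηinv a b •
      ((UniversalEnvelopingAlgebra.ι ℂ (x a)) ⊗ₜ[ℂ] (UniversalEnvelopingAlgebra.ι ℂ (x b)))) :
    ∀ i, comm' (comm' ((UniversalEnvelopingAlgebra.ι ℂ (x i)) ⊗ₜ[ℂ]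
          (1 : UniversalEnvelopingAlgebra ℂ L)) Ω) Ω
      = (2⁻¹ : ℂ) • ∑ j, ∑ a, ∑ b, ∑ c,
          (αup i j c * αup j a b + αup i j b * αup j a c) •
          ((UniversalEnvelopingAlgebra.ι ℂ (x a)) ⊗ₜ[ℂ]
              (acomm' (UniversalEnvelopingAlgebra.ι ℂ (x b))
                (UniversalEnvelopingAlgebra.ι ℂ (x c)))
            - (acomm' (UniversalEnvelopingAlgebra.ι ℂ (x b))
                (UniversalEnvelopingAlgebra.ι ℂ (x c))) ⊗ₜ[ℂ]
              (UniversalEnvelopingAlgebra.ι ℂ (x a))) :=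
  double_commutator_with_casimir_tensor_general x α hα η hη ηinv hηinv αup hαup Ω hΩ
end

section
/- In the universal enveloping algebra U(g) of a simple Lie algebra g, with Ω_g = η^{ab} x_a⊗x_b, one has α_i^{jk} [[x_k⊗1, Ω_g], [x_j⊗1, Ω_g]] = α_i^{jk} α_j^{cr} α_k^{bs} α_{sr}^a (x_a ⊗ {x_b,x_c} + {x_b,x_c} ⊗ x_a). -/
/-!
Bracketing with `x_k ⊗ 1` only acts on the first leg of `Ω`, so
`[x_k ⊗ 1, Ω] = α_k^{bs} x_s ⊗ x_b`. Expanding the commutator of two such tensors with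
`[a ⊗ b, c ⊗ d] = [a, c] ⊗ {b, d} + {a, c} ⊗ [b, d]` produces the two halves of the right-hand
side; the second half matches after renaming `b ↔ s` and `c ↔ r`, which costs two signs because
`α_k^{bs}` is antisymmetric in `b, s`. That antisymmetry is the ad-invariance of the Killing form
`η`, transported through its inverse. The identity already holds for every pair `j, k`, before
contracting with `α_i^{jk}`.
-/

open TensorProduct Matrix

lemma comm'_eq_lie {A : Type*} [Ring A] (x y : A) : comm' x y = ⁅x, y⁆ :=
  (Ring.lie_def x y).symm

section StructureConstants

variable {R L ι : Type*} [CommRing R] [LieRing L] [LieAlgebra R L] [Fintype ι] [DecidableEq ι]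

lemma Matrix.IsSymm.of_mul_eq_one_s11 {K N : Matrix ι ι R} (hK : K.IsSymm) (hKN : K * N = 1) :
    N.IsSymm :=
  inv_eq_right_inv hKN ▸ hK.inv

lemma Matrix.transpose_mul_eq_neg {K N A : Matrix ι ι R} (hK : K.IsSymm) (hKN : K * N = 1)
    (hA : (A * K)ᵀ = -(A * K)) : (N * A)ᵀ = -(N * A) := by
  have hN : Nᵀ = N := hK.of_mul_eq_one_s11 hKN
  have : N * A = N * (A * K) * N := by rw [Matrix.mul_assoc N, Matrix.mul_assoc A, hKN, mul_one]
  rw [this, transpose_mul, transpose_mul, hA, hN]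
  simp [Matrix.mul_assoc]

lemma isSymm_toMatrix_killingForm (x : Module.Basis ι R L) :
    (LinearMap.BilinForm.toMatrix x (killingForm R L)).IsSymm :=
  (LinearMap.BilinForm.isSymm_toMatrix_iff_isSymm x).2 <|
    LinearMap.BilinForm.isSymm_iff.2 (LieModule.traceForm_isSymm R L L)

variable (x : Module.Basis ι R L) (α : ι → ι → ι → R)
  (hα : ∀ a b, ⁅x a, x b⁆ = ∑ c, α a b c • x c)
include hα

lemma killingForm_apply_basis (a b : ι) :
    killingForm R L (x a) (x b) = ∑ c, ∑ d, α a c d * α b d c := by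
  rw [LieModule.traceForm_comm, LieModule.traceForm_apply_apply,
    LinearMap.trace_eq_matrix_trace R x, Matrix.trace]
  refine Finset.sum_congr rfl fun c _ => ?_
  simp [LinearMap.toMatrix_apply, hα, Finset.sum_apply, Finsupp.single_apply]

lemma structConst_mul_toMatrix_killingForm_apply (i d m : ι) :
    (of (α i) * LinearMap.BilinForm.toMatrix x (killingForm R L)) d m
      = killingForm R L ⁅x i, x d⁆ (x m) := by
  simp [Matrix.mul_apply, LinearMap.BilinForm.toMatrix_apply, hα]

lemma transpose_mul_structConst_eq_neg {N : Matrix ι ι R}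
    (hN : LinearMap.BilinForm.toMatrix x (killingForm R L) * N = 1) (i : ι) :
    (N * of (α i))ᵀ = -(N * of (α i)) := by
  refine transpose_mul_eq_neg (isSymm_toMatrix_killingForm x) hN ?_
  ext d m
  simp [structConst_mul_toMatrix_killingForm_apply x α hα,
    LieModule.traceForm_apply_lie_apply', LieModule.traceForm_comm R L L (x d)]

end StructureConstants

lemma sum_mul_smul_swap_of_antisymm {R M ι : Type*} [CommRing R] [AddCommGroup M] [Module R M]
    [Fintype ι] {P Q : ι → ι → R} (hP : ∀ b s, P b s = -P s b) (hQ : ∀ c r, Q c r = -Q r c)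
    (f : ι → ι → ι → ι → M) :
    ∑ b, ∑ s, ∑ c, ∑ r, (P b s * Q c r) • f s b r c
      = ∑ b, ∑ s, ∑ c, ∑ r, (P b s * Q c r) • f b s c r := by
  rw [Finset.sum_comm]
  refine Finset.sum_congr rfl fun b _ => Finset.sum_congr rfl fun s _ => ?_
  rw [Finset.sum_comm]
  refine Finset.sum_congr rfl fun c _ => Finset.sum_congr rfl fun r _ => ?_
  rw [hP, hQ, neg_mul_neg]

section AssociativeBracket

attribute [local instance] LieRing.ofAssociativeRing LieAlgebra.ofAssociativeAlgebra

lemma UniversalEnvelopingAlgebra.lie_ι_eq_sum {R L κ : Type*} [CommRing R] [LieRing L]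
    [LieAlgebra R L] [Fintype κ] (x : κ → L) (α : κ → κ → κ → R)
    (hα : ∀ a b, ⁅x a, x b⁆ = ∑ c, α a b c • x c) (a b : κ) :
    ⁅ι R (x a), ι R (x b)⁆ = ∑ c, α a b c • ι R (x c) := by
  rw [← LieHom.map_lie, hα, map_sum]
  simp

variable {A B : Type*} [Ring A] [Ring B] [Algebra ℂ A] [Algebra ℂ B]

lemma lie_tmul_tmul (a c : A) (b d : B) :
    ⁅a ⊗ₜ[ℂ] b, c ⊗ₜ[ℂ] d⁆ = ⁅a, c⁆ ⊗ₜ acomm' b d + acomm' a c ⊗ₜ ⁅b, d⁆ := by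
  simp only [Ring.lie_def, acomm', Algebra.TensorProduct.tmul_mul_tmul, sub_tmul, tmul_sub,
    add_tmul, tmul_add, tmul_smul, smul_sub, smul_add, ← smul_tmul']
  module

lemma lie_tmul_one_tmul (a c : A) (d : B) : ⁅a ⊗ₜ[ℂ] (1 : B), c ⊗ₜ[ℂ] d⁆ = ⁅a, c⁆ ⊗ₜ d := by
  simp only [Ring.lie_def, Algebra.TensorProduct.tmul_mul_tmul, one_mul, mul_one, sub_tmul]

variable {ι : Type*} [Fintype ι] (X : ι → A) (α : ι → ι → ι → ℂ)
  (hX : ∀ a b, ⁅X a, X b⁆ = ∑ c, α a b c • X c)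
include hX

lemma lie_tmul_one_sum_smul_tmul (N : ι → ι → ℂ) (k : ι) :
    ⁅X k ⊗ₜ[ℂ] (1 : A), (∑ a, ∑ b, N a b • (X a ⊗ₜ[ℂ] X b) : A ⊗[ℂ] A)⁆
      = ∑ b, ∑ s, (∑ a, N a b * α k a s) • (X s ⊗ₜ[ℂ] X b) := by
  simp only [lie_sum, lie_smul, lie_tmul_one_tmul, hX, sum_tmul, ← smul_tmul', Finset.smul_sum,
    smul_smul, Finset.sum_smul]
  exact Finset.sum_comm_cycle.symm

lemma lie_sum_smul_tmul_sum_smul_tmul {P Q : ι → ι → ℂ} (hP : ∀ b s, P b s = -P s b)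
    (hQ : ∀ c r, Q c r = -Q r c) :
    ⁅(∑ b, ∑ s, P b s • (X s ⊗ₜ[ℂ] X b) : A ⊗[ℂ] A), ∑ c, ∑ r, Q c r • (X r ⊗ₜ[ℂ] X c)⁆
      = ∑ r, ∑ s, ∑ a, ∑ b, ∑ c, (Q c r * P b s * α s r a) •
          (X a ⊗ₜ[ℂ] acomm' (X b) (X c) + acomm' (X b) (X c) ⊗ₜ[ℂ] X a) := calc
  _ = ∑ b, ∑ s, ∑ c, ∑ r, (P b s * Q c r) •
        (⁅X s, X r⁆ ⊗ₜ[ℂ] acomm' (X b) (X c) + acomm' (X s) (X r) ⊗ₜ[ℂ] ⁅X b, X c⁆) := by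
    simp only [sum_lie, smul_lie]
    simp only [lie_sum, lie_smul, Finset.smul_sum, smul_smul, lie_tmul_tmul]
  _ = ∑ b, ∑ s, ∑ c, ∑ r, (P b s * Q c r) •
        (⁅X s, X r⁆ ⊗ₜ[ℂ] acomm' (X b) (X c) + acomm' (X b) (X c) ⊗ₜ[ℂ] ⁅X s, X r⁆) := by
    simp only [smul_add, Finset.sum_add_distrib]
    congr 1
    exact sum_mul_smul_swap_of_antisymm hP hQ fun b s c r => acomm' (X b) (X c) ⊗ₜ[ℂ] ⁅X s, X r⁆
  _ = ∑ b, ∑ s, ∑ c, ∑ r, ∑ a, (Q c r * P b s * α s r a) •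
        (X a ⊗ₜ[ℂ] acomm' (X b) (X c) + acomm' (X b) (X c) ⊗ₜ[ℂ] X a) := by
    simp only [hX, sum_tmul, tmul_sum, ← smul_tmul', tmul_smul, ← Finset.sum_add_distrib,
      ← smul_add, Finset.smul_sum, smul_smul, mul_comm (P _ _) (Q _ _)]
  _ = _ := by
    rw [Finset.sum_congr rfl fun _ _ => Finset.sum_comm_cycle, Finset.sum_comm]
    refine Finset.sum_congr rfl fun r _ => ?_
    rw [Finset.sum_comm]
    exact Finset.sum_congr rfl fun s _ => Finset.sum_comm_cycle

end AssociativeBracket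

theorem contracted_double_commutator_identity_general
    {L : Type*} [LieRing L] [LieAlgebra ℂ L]
    {ι : Type*} [Fintype ι] [DecidableEq ι]
    (x : Module.Basis ι ℂ L) (α : ι → ι → ι → ℂ)
    (hα : ∀ a b, ⁅x a, x b⁆ = ∑ c, α a b c • x c)
    (η : ι → ι → ℂ)
    (hη : ∀ a b, η a b = ∑ c, ∑ d, α a c d * α b d c)
    (ηinv : ι → ι → ℂ)
    (hηinv : ∀ a c, (∑ b, η a b * ηinv b c) = if a = c then 1 else 0)
    (αup : ι → ι → ι → ℂ)
    (hαup : ∀ a b c, αup a b c = ∑ d, ηinv b d * α a d c)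
    (Ω : UniversalEnvelopingAlgebra ℂ L ⊗[ℂ] UniversalEnvelopingAlgebra ℂ L)
    (hΩ : Ω = ∑ a, ∑ b, ηinv a b •
      ((UniversalEnvelopingAlgebra.ι ℂ (x a)) ⊗ₜ[ℂ] (UniversalEnvelopingAlgebra.ι ℂ (x b)))) :
    ∀ i,
      (∑ j, ∑ k, αup i j k •
        comm'
          (comm' ((UniversalEnvelopingAlgebra.ι ℂ (x k)) ⊗ₜ[ℂ]
            (1 : UniversalEnvelopingAlgebra ℂ L)) Ω)
          (comm' ((UniversalEnvelopingAlgebra.ι ℂ (x j)) ⊗ₜ[ℂ]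
            (1 : UniversalEnvelopingAlgebra ℂ L)) Ω))
      = ∑ j, ∑ k, ∑ r, ∑ s, ∑ a, ∑ b, ∑ c,
          (αup i j k * αup j c r * αup k b s * α s r a) •
          ((UniversalEnvelopingAlgebra.ι ℂ (x a)) ⊗ₜ[ℂ]
              (acomm' (UniversalEnvelopingAlgebra.ι ℂ (x b))
                (UniversalEnvelopingAlgebra.ι ℂ (x c)))
            + (acomm' (UniversalEnvelopingAlgebra.ι ℂ (x b))
                (UniversalEnvelopingAlgebra.ι ℂ (x c))) ⊗ₜ[ℂ]
              (UniversalEnvelopingAlgebra.ι ℂ (x a))) := by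
  intro i
  set K := LinearMap.BilinForm.toMatrix x (killingForm ℂ L)
  have hK : of η = K := by
    ext a b
    simp [K, hη, LinearMap.BilinForm.toMatrix_apply, killingForm_apply_basis x α hα]
  have hKN : K * of ηinv = 1 := by
    rw [← hK]
    ext a c
    simpa [Matrix.mul_apply, Matrix.one_apply] using hηinv a c
  have hηinv_symm : ∀ a b, ηinv a b = ηinv b a := fun a b =>
    ((isSymm_toMatrix_killingForm x).of_mul_eq_one_s11 hKN).apply b a
  have hαup_anti : ∀ k b s, αup k b s = -αup k s b := fun k b s => by
    simpa [Matrix.mul_apply, hαup] using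
      congrFun (congrFun (transpose_mul_structConst_eq_neg x α hα hKN k) s) b
  have hX := UniversalEnvelopingAlgebra.lie_ι_eq_sum x α hα
  have hT : ∀ k, comm' (UniversalEnvelopingAlgebra.ι ℂ (x k) ⊗ₜ[ℂ] 1) Ω
      = ∑ b, ∑ s, αup k b s •
          (UniversalEnvelopingAlgebra.ι ℂ (x s) ⊗ₜ[ℂ] UniversalEnvelopingAlgebra.ι ℂ (x b)) := by
    intro k
    rw [comm'_eq_lie, hΩ, lie_tmul_one_sum_smul_tmul _ α hX]
    simp only [hαup, hηinv_symm]
  simp only [hT, comm'_eq_lie, lie_sum_smul_tmul_sum_smul_tmul _ α hX (hαup_anti _) (hαup_anti _),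
    Finset.smul_sum, smul_smul, mul_assoc]

/-- In `U(g) ⊗ U(g)` for a finite dimensional complex simple Lie algebra `g`,
with `Ω = ∑ ηinv a b • (x_a ⊗ x_b)`, one has
`α_i^{jk} [[x_k⊗1, Ω], [x_j⊗1, Ω]]
  = α_i^{jk} α_j^{cr} α_k^{bs} α_{sr}^a (x_a ⊗ {x_b,x_c} + {x_b,x_c} ⊗ x_a)`. -/
theorem contracted_double_commutator_identity
    {L : Type*} [LieRing L] [LieAlgebra ℂ L]
    [FiniteDimensional ℂ L] [LieAlgebra.IsSimple ℂ L]
    {ι : Type*} [Fintype ι] [DecidableEq ι]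
    (x : Module.Basis ι ℂ L) (α : ι → ι → ι → ℂ)
    (hα : ∀ a b, ⁅x a, x b⁆ = ∑ c, α a b c • x c)
    (η : ι → ι → ℂ)
    (hη : ∀ a b, η a b = ∑ c, ∑ d, α a c d * α b d c)
    (ηinv : ι → ι → ℂ)
    (hηinv : ∀ a c, (∑ b, η a b * ηinv b c) = if a = c then 1 else 0)
    (αup : ι → ι → ι → ℂ)
    (hαup : ∀ a b c, αup a b c = ∑ d, ηinv b d * α a d c)
    (Ω : UniversalEnvelopingAlgebra ℂ L ⊗[ℂ] UniversalEnvelopingAlgebra ℂ L)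
    (hΩ : Ω = ∑ a, ∑ b, ηinv a b •
      ((UniversalEnvelopingAlgebra.ι ℂ (x a)) ⊗ₜ[ℂ] (UniversalEnvelopingAlgebra.ι ℂ (x b)))) :
    ∀ i,
      (∑ j, ∑ k, αup i j k •
        comm'
          (comm' ((UniversalEnvelopingAlgebra.ι ℂ (x k)) ⊗ₜ[ℂ]
            (1 : UniversalEnvelopingAlgebra ℂ L)) Ω)
          (comm' ((UniversalEnvelopingAlgebra.ι ℂ (x j)) ⊗ₜ[ℂ]
            (1 : UniversalEnvelopingAlgebra ℂ L)) Ω))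
      = ∑ j, ∑ k, ∑ r, ∑ s, ∑ a, ∑ b, ∑ c,
          (αup i j k * αup j c r * αup k b s * α s r a) •
          ((UniversalEnvelopingAlgebra.ι ℂ (x a)) ⊗ₜ[ℂ]
              (acomm' (UniversalEnvelopingAlgebra.ι ℂ (x b))
                (UniversalEnvelopingAlgebra.ι ℂ (x c)))
            + (acomm' (UniversalEnvelopingAlgebra.ι ℂ (x b))
                (UniversalEnvelopingAlgebra.ι ℂ (x c))) ⊗ₜ[ℂ]
              (UniversalEnvelopingAlgebra.ι ℂ (x a))) :=
  contracted_double_commutator_identity_general x α hα η hη ηinv hηinv αup hαup Ω hΩ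
end

section
/- In a tensor product A⊗A of associative ℂ-algebras: {x_i⊗1, 1⊗x_j, x_a⊗{x_b,x_c}} = {x_i, x_a} ⊗ {x_j, {x_b,x_c}} − (1/12) [x_a, x_i] ⊗ [x_j, {x_b,x_c}]. -/
open TensorProduct

/-- The triple symmetrizer `{x,y,z} = (1/6) Σ_σ x_σ y_σ z_σ`. -/
noncomputable def sym3 {A : Type*} [Ring A] [Algebra ℂ A] (x y z : A) : A :=
  (6⁻¹ : ℂ) • ∑ σ : Equiv.Perm (Fin 3),
    ![x, y, z] (σ 0) * ![x, y, z] (σ 1) * ![x, y, z] (σ 2)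

lemma sym3_eq {A : Type*} [Ring A] [Algebra ℂ A] (x y z : A) :
    sym3 x y z = (6⁻¹ : ℂ) • (x*y*z + y*x*z + z*x*y + y*z*x + x*z*y + z*y*x) := by
  rw [sym3, show (Finset.univ : Finset (Equiv.Perm (Fin 3))) =
    {1, Equiv.swap 0 1, Equiv.swap 0 2, Equiv.swap 1 2,
     Equiv.swap 0 1 * Equiv.swap 1 2, Equiv.swap 1 2 * Equiv.swap 0 1} from by decide]
  rw [Finset.sum_insert (by decide), Finset.sum_insert (by decide),
      Finset.sum_insert (by decide), Finset.sum_insert (by decide),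
      Finset.sum_insert (by decide), Finset.sum_singleton]
  simp (config := { decide := true }) [Equiv.swap_apply_def, Equiv.Perm.mul_apply]
  module

/-- In `A ⊗ A`,
`{x_i⊗1, 1⊗x_j, x_a⊗{x_b,x_c}}
  = {x_i,x_a} ⊗ {x_j,{x_b,x_c}} − (1/12) [x_a,x_i] ⊗ [x_j,{x_b,x_c}]`. -/
theorem sym3_tensor_mixed {A : Type*} [Ring A] [Algebra ℂ A]
    (xi xj xa xb xc : A) :
    sym3 (xi ⊗ₜ[ℂ] (1 : A)) ((1 : A) ⊗ₜ[ℂ] xj) (xa ⊗ₜ[ℂ] acomm' xb xc)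
      = acomm' xi xa ⊗ₜ[ℂ] acomm' xj (acomm' xb xc)
        - (12⁻¹ : ℂ) • (comm' xa xi ⊗ₜ[ℂ] comm' xj (acomm' xb xc)) := by
  set y := acomm' xb xc with hy
  rw [sym3_eq]
  show _ = acomm' xi xa ⊗ₜ[ℂ] acomm' xj y - (12⁻¹ : ℂ) • (comm' xa xi ⊗ₜ[ℂ] comm' xj y)
  rw [comm', comm', acomm', acomm']
  simp only [Algebra.TensorProduct.tmul_mul_tmul, one_mul, mul_one,
    TensorProduct.tmul_add, TensorProduct.add_tmul, TensorProduct.tmul_sub,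
    TensorProduct.sub_tmul, ← TensorProduct.smul_tmul', TensorProduct.tmul_smul, smul_smul,
    smul_add, smul_sub]
  module
end
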